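/- Let N ≥ 2 and K ≥ 1, and let (w, P) be a configuration with confidence e. Then the entropy impurity satisfies ∑_{k ∈ Fin K} w k · ∑_{i ∈ Fin N} (−P k i · log (P k i)) ≤ (−e·log e) + (−(1−e)·log(1−e)) + (1−e)·log(N−1), where log is the natural logarithm and 0·log 0 is interpreted as 0. (Fano's inequality, obtained as the specialization of the paper's Theorem 1 to the entropy impurity, with e = 1 − P_e being the probability of correct maximum-likelihood decoding.) -/

import Mathlib

/-!
Splitting off any symbol `j`, the remaining mass `1 - p j` is spread over `N - 1` symbols, so by
Jensen for `negMulLog` it contributes at most `negMulLog (1 - p j) + (1 - p j) * log (N - 1)`;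
hence the entropy of each row is at most the `N`-ary entropy `qaryEntropy N (1 - p j)` of its
error probability, in particular for the most likely symbol. Averaging over the rows and using
concavity of `qaryEntropy N` (Jensen again) bounds the conditional entropy by
`qaryEntropy N (1 - e)`, which is the right-hand side.
-/

open Finset

/-- The maximum of a real-valued vector over the finite index set `Fin N` (`N > 0`). -/
noncomputable def colMax {N : ℕ} (hN : 0 < N) (v : Fin N → ℝ) : ℝ :=
  Finset.univ.sup' (Finset.univ_nonempty_iff.mpr ⟨⟨0, hN⟩⟩) v

open Real

lemma sum_negMulLog_le_negMulLog_sum_add_mul_log_card {ι : Type*} (s : Finset ι) (q : ι → ℝ)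
    (hq : ∀ i ∈ s, 0 ≤ q i) :
    ∑ i ∈ s, negMulLog (q i) ≤ negMulLog (∑ i ∈ s, q i) + (∑ i ∈ s, q i) * log #s := by
  rcases s.eq_empty_or_nonempty with rfl | hs
  · simp
  have hn : (0 : ℝ) < #s := by exact_mod_cast hs.card_pos
  have jensen := concaveOn_negMulLog.le_map_sum (t := s) (w := fun _ => (#s : ℝ)⁻¹) (p := q)
    (fun _ _ => by positivity) (by simp [hn.ne']) hq
  have hscale (x : ℝ) : negMulLog ((#s : ℝ)⁻¹ * x) = (#s : ℝ)⁻¹ * (negMulLog x + x * log #s) := by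
    rw [negMulLog_mul, negMulLog, log_inv]; ring
  simp only [smul_eq_mul, ← mul_sum, hscale] at jensen
  exact le_of_mul_le_mul_left jensen (by positivity)

lemma sum_negMulLog_le_qaryEntropy {ι : Type*} [Fintype ι] (p : ι → ℝ) (hp : ∀ i, 0 ≤ p i)
    (hp1 : ∑ i, p i = 1) (j : ι) :
    ∑ i, negMulLog (p i) ≤ qaryEntropy (Fintype.card ι) (1 - p j) := by
  classical
  have hsplit := add_sum_erase univ (fun i => negMulLog (p i)) (mem_univ j)
  have hrest : ∑ i ∈ univ.erase j, p i = 1 - p j := by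
    rw [← hp1, ← add_sum_erase univ p (mem_univ j), add_sub_cancel_left]
  have hcard : ((#(univ.erase j) : ℕ) : ℝ) = ((Fintype.card ι : ℤ) - 1 : ℤ) := by
    rw [card_erase_of_mem (mem_univ j), card_univ]
    push_cast [Nat.cast_sub (Fintype.card_pos_iff.mpr ⟨j⟩)]
    rfl
  have hgroup := sum_negMulLog_le_negMulLog_sum_add_mul_log_card (univ.erase j) p
    (fun i _ => hp i)
  rw [hrest, hcard] at hgroup
  rw [qaryEntropy, binEntropy_eq_negMulLog_add_negMulLog_one_sub, sub_sub_cancel]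
  linarith

lemma exists_eq_colMax {N : ℕ} (hN : 0 < N) (v : Fin N → ℝ) : ∃ i, v i = colMax hN v := by
  obtain ⟨i, -, hi⟩ := exists_mem_eq_sup' (univ_nonempty_iff.mpr ⟨⟨0, hN⟩⟩) v
  exact ⟨i, hi.symm⟩

/-- Fano's inequality, obtained from the paper's Theorem 1 specialized to the entropy
impurity: the conditional entropy is at most
`H(e) + (1 - e) * log (N - 1)` where `e` is the confidence of the configuration. -/
theorem fano_inequality (N K : ℕ) (hN : 2 ≤ N)
    (w : Fin K → ℝ) (hw : ∀ k, 0 ≤ w k) (hws : ∑ k, w k = 1)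
    (P : Fin K → Fin N → ℝ) (hP : ∀ k i, 0 ≤ P k i) (hPs : ∀ k, ∑ i, P k i = 1)
    (e : ℝ) (he : e = ∑ k, w k * colMax (by omega) (P k)) :
    ∑ k, w k * ∑ i, Real.negMulLog (P k i) ≤
      Real.negMulLog e + Real.negMulLog (1 - e) + (1 - e) * Real.log ((N : ℝ) - 1) := by
  have hN₀ : 0 < N := by omega
  choose best hbest using fun k => exists_eq_colMax hN₀ (P k)
  have herr : ∀ k ∈ univ, 1 - colMax hN₀ (P k) ∈ Set.Icc (0 : ℝ) 1 := fun k _ => by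
    rw [← hbest k, ← hPs k]
    exact ⟨sub_nonneg.mpr (single_le_sum (fun i _ => hP k i) (mem_univ _)),
      sub_le_self _ (hP k _)⟩
  have hmix : ∑ k, w k * (1 - colMax hN₀ (P k)) = 1 - e := by
    simp only [mul_sub, mul_one, sum_sub_distrib, hws, he]
  calc ∑ k, w k * ∑ i, negMulLog (P k i)
      ≤ ∑ k, w k * qaryEntropy N (1 - colMax hN₀ (P k)) := by
        gcongr with k
        · exact hw k
        simpa [hbest k] using sum_negMulLog_le_qaryEntropy (P k) (hP k) (hPs k) (best k)
    _ ≤ qaryEntropy N (1 - e) := by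
        simpa [hmix] using strictConcaveOn_qaryEntropy.concaveOn.le_map_sum
          (fun k _ => hw k) hws herr
    _ = _ := by
        rw [qaryEntropy, binEntropy_eq_negMulLog_add_negMulLog_one_sub, sub_sub_cancel]
        push_cast
        ring
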